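/- Let G be a finite group and V a nonzero irreducible finite-dimensional complex representation of G which is isomorphic to its dual representation V* but such that the only G-invariant symmetric bilinear form on V is zero (i.e. V is a quaternionic-type representation). Then the order of G is divisible by 4. -/

import Mathlib

/-!
The invariant form given by `V ≃ V*` is alternating, so Schur orthogonality gives the
Frobenius–Schur value `∑ g, χ (g ^ 2) = -|G|`. If `4 ∤ |G|`, let `m` be the odd part of
`|G|`. The elements `u` with `u ^ m = 1` form a subgroup (the kernel of the sign of the left regular
action), and `g ↦ (g ^ m, g ^ 2)` is a bijection from `G` onto the commuting pairs `(t, u)` with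
`t ^ 2 = 1` and `u ^ m = 1`. Hence `∑ g, χ (g ^ 2)` is a sum over `t` of character sums over
subgroups `H`, each equal to `|H| · dim V ^ H ≥ 0`, contradicting `-|G| < 0`.
-/

open Finset Module LinearMap

theorem exists_odd_and_dvd_two_mul_of_not_four_dvd {n : ℕ} (h4 : ¬ 4 ∣ n) :
    ∃ m, Odd m ∧ n ∣ 2 * m := by
  rcases Nat.even_or_odd n with ⟨c, rfl⟩ | hn
  · exact ⟨c, Nat.odd_iff.mpr (by omega), by rw [two_mul]⟩
  · exact ⟨n, hn, dvd_mul_left n 2⟩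

theorem sum_apply_sq_eq_sum_sum {G M : Type*} [Monoid G] [DecidableEq G] [Fintype G]
    [AddCommMonoid M] {m : ℕ} (hm : Odd m) (hG : ∀ g : G, g ^ (2 * m) = 1) (f : G → M) :
    ∑ g, f (g ^ 2) = ∑ t with t ^ 2 = 1, ∑ u with u ^ m = 1 ∧ t * u = u * t, f u := by
  obtain ⟨k, rfl⟩ := hm
  rw [← sum_finset_product' (univ.filter fun p : G × G ↦
      p.1 ^ 2 = 1 ∧ p.2 ^ (2 * k + 1) = 1 ∧ p.1 * p.2 = p.2 * p.1) _ _ (by simp)]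
  -- `g ↦ (g ^ m, g ^ 2)` is inverted by `(t, u) ↦ t * u ^ ((m + 1) / 2)`
  have hinv : ∀ t u : G, t ^ 2 = 1 → u ^ (2 * k + 1) = 1 → Commute t u →
      (t * u ^ (k + 1)) ^ (2 * k + 1) = t ∧ (t * u ^ (k + 1)) ^ 2 = u := by
    intro t u ht hu htu
    rw [(htu.pow_right _).mul_pow, (htu.pow_right _).mul_pow, ← pow_mul, ← pow_mul,
      pow_succ, pow_mul, ht, one_pow, one_mul, one_mul, mul_comm, pow_mul, hu, one_pow, mul_one,
      show (k + 1) * 2 = 2 * k + 1 + 1 by ring, pow_succ, hu, one_mul]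
    exact ⟨rfl, rfl⟩
  refine sum_nbij' (fun g ↦ (g ^ (2 * k + 1), g ^ 2)) (fun p ↦ p.1 * p.2 ^ (k + 1))
    ?_ (fun _ _ ↦ mem_univ _) ?_ ?_ fun _ _ ↦ rfl
  · intro g _
    simp only [mem_filter, mem_univ, true_and, ← pow_mul]
    exact ⟨by rw [mul_comm (2 * k + 1), hG], hG g, Commute.pow_pow_self g _ _⟩
  · intro g _
    rw [← pow_mul, ← pow_add, show 2 * k + 1 + 2 * (k + 1) = 2 * (2 * k + 1) + 1 by ring,
      pow_succ, hG, one_mul]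
  · rintro ⟨t, u⟩ h
    simp only [mem_filter, mem_univ, true_and] at h
    obtain ⟨ht, hu, htu⟩ := h
    obtain ⟨h1, h2⟩ := hinv t u ht hu htu
    simp [h1, h2]

section RegularSign

variable (G : Type*) [Group G] [Fintype G] [DecidableEq G]

def regularSign : G →* ℤˣ := Equiv.Perm.sign.comp (MulAction.toPermHom G G)

variable {G}

theorem regularSign_of_sq_eq_one {t : G} (ht : t ^ 2 = 1) (ht1 : t ≠ 1) :
    regularSign G t = (-1) ^ (Fintype.card G / 2) := by
  have hfix : Fintype.card (Function.fixedPoints (MulAction.toPermHom G G t)) = 0 :=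
    Fintype.card_eq_zero_iff.mpr ⟨fun ⟨_, hx⟩ ↦ ht1 (mul_eq_right.mp hx)⟩
  rw [regularSign, MonoidHom.comp_apply,
    Equiv.Perm.sign_of_pow_two_eq_one (by rw [← map_pow, ht, map_one]), hfix, Nat.sub_zero]

theorem regularSign_eq_one_iff {m : ℕ} (hm : Odd m) (hG : Fintype.card G ∣ 2 * m) (g : G) :
    regularSign G g = 1 ↔ g ^ m = 1 := by
  have hodd : ∀ s : ℤˣ, s ^ m = s := fun s ↦ by
    obtain ⟨k, rfl⟩ := hm
    rw [pow_succ, pow_mul, Int.units_sq, one_pow, one_mul]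
  constructor
  · intro h
    by_contra hne
    have hsq : (g ^ m) ^ 2 = 1 := by
      rw [← pow_mul, mul_comm, ← orderOf_dvd_iff_pow_eq_one]
      exact orderOf_dvd_card.trans hG
    have hhalf : Odd (Fintype.card G / 2) := by
      obtain ⟨c, hc⟩ : 2 ∣ Fintype.card G := orderOf_eq_prime hsq hne ▸ orderOf_dvd_card
      rw [hc, Nat.mul_div_cancel_left c two_pos]
      exact hm.of_dvd_nat (Nat.dvd_of_mul_dvd_mul_left two_pos (hc ▸ hG))
    have := regularSign_of_sq_eq_one hsq hne
    rw [map_pow, h, one_pow, hhalf.neg_one_pow] at this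
    exact absurd this (by decide)
  · intro h
    rw [← hodd (regularSign G g), ← map_pow, h, map_one]

end RegularSign

namespace Representation

variable {G k V : Type*} [Group G] [Field k] [AddCommGroup V] [Module k V]
  (ρ : Representation k G V)

theorem sum_character_eq_card_mul_finrank_invariants [Fintype G] [FiniteDimensional k V]
    [Invertible (Nat.card G : k)] :
    ∑ g, ρ.character g = (Nat.card G * finrank k ρ.invariants : ℕ) := by
  rw [Nat.cast_mul, ← ρ.card_inv_mul_sum_char_eq_finrank, mul_inv_cancel_left₀]
  exact Invertible.ne_zero _

theorem exists_sum_character_sq_eq_natCast_of_not_four_dvd [Fintype G] [FiniteDimensional k V]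
    [CharZero k] (h4 : ¬ 4 ∣ Fintype.card G) : ∃ N : ℕ, ∑ g, ρ.character (g ^ 2) = N := by
  classical
  obtain ⟨m, hm, hGm⟩ := exists_odd_and_dvd_two_mul_of_not_four_dvd h4
  have hG : ∀ g : G, g ^ (2 * m) = 1 := fun g ↦
    orderOf_dvd_iff_pow_eq_one.mp (orderOf_dvd_card.trans hGm)
  have hfiber : ∀ t : G, ∃ N : ℕ,
      ∑ u with u ^ m = 1 ∧ t * u = u * t, ρ.character u = N := by
    intro t
    let H := (regularSign G).ker ⊓ Subgroup.centralizer {t}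
    have : Invertible (Nat.card H : k) :=
      invertibleOfNonzero (Nat.cast_ne_zero.mpr Nat.card_pos.ne')
    refine ⟨_, Eq.trans ?_ (sum_character_eq_card_mul_finrank_invariants (ρ.comp H.subtype))⟩
    refine sum_subtype _ (fun u ↦ ?_) ρ.character
    simp [H, Subgroup.mem_centralizer_singleton_iff, regularSign_eq_one_iff hm hGm, eq_comm]
  choose N hN using hfiber
  refine ⟨∑ t with t ^ 2 = 1, N t, ?_⟩
  rw [sum_apply_sq_eq_sum_sum hm hG, Nat.cast_sum]
  exact sum_congr rfl fun t _ ↦ hN t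

theorem eq_neg_flip_of_forall_symm_eq_zero
    (hsymm : ∀ B : V →ₗ[k] V →ₗ[k] k, (∀ v w, B v w = B w v) →
      (∀ g v w, B (ρ g v) (ρ g w) = B v w) → B = 0)
    {B : V →ₗ[k] V →ₗ[k] k} (hB : ∀ g v w, B (ρ g v) (ρ g w) = B v w) (v w : V) :
    B w v = -B v w := by
  have h := hsymm (B + B.flip) (fun v w ↦ add_comm _ _) fun g v w ↦ by simp [hB]
  exact eq_neg_of_add_eq_zero_right (LinearMap.congr_fun₂ h v w)

namespace IsIrreducible

variable [FiniteDimensional k V] [IsAlgClosed k] [ρ.IsIrreducible]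

theorem exists_eq_smul_one {T : Module.End k V} (hT : ∀ g, ρ g * T = T * ρ g) :
    ∃ c : k, T = c • 1 := by
  obtain ⟨c, hc⟩ := algebraMap_intertwiningMap_bijective_of_isAlgClosed.2
    (T.intertwiningMap_of_isIntertwiningMap ρ ρ fun g v ↦ (LinearMap.congr_fun (hT g) v).symm)
  exact ⟨c, congrArg IntertwiningMap.toLinearMap hc.symm⟩

variable [Fintype G]

theorem finrank_smul_sum_conj (A : Module.End k V) :
    (finrank k V : k) • ∑ g, ρ g * A * ρ g⁻¹ = (Fintype.card G * trace k V A) • 1 := by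
  obtain ⟨c, hc⟩ := exists_eq_smul_one ρ (T := ∑ g, ρ g * A * ρ g⁻¹) fun h ↦ by
    rw [mul_sum, sum_mul]
    refine Fintype.sum_equiv (Equiv.mulLeft h) _ _ fun g ↦ ?_
    simp only [Equiv.coe_mulLeft, map_mul, mul_inv_rev, mul_assoc]
    rw [← map_mul ρ h⁻¹ h, inv_mul_cancel, map_one, mul_one]
  have htrace_conj : ∀ g, trace k V (ρ g * A * ρ g⁻¹) = trace k V A := fun g ↦ by
    rw [trace_mul_comm, ← mul_assoc, ← map_mul, inv_mul_cancel, map_one, one_mul]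
  have htrace := congrArg (trace k V) hc
  simp only [map_sum, htrace_conj, sum_const, card_univ, nsmul_eq_mul, map_smul, trace_one,
    smul_eq_mul] at htrace
  rw [hc, smul_smul, htrace, mul_comm]

theorem finrank_smul_sum_smul_of_invariant (B : V →ₗ[k] V →ₗ[k] k)
    (hB : ∀ g v w, B (ρ g v) (ρ g w) = B v w) (x y z : V) :
    (finrank k V : k) • ∑ g, B (ρ g y) z • ρ g x = (Fintype.card G * B y x) • z := by
  have := LinearMap.congr_fun (finrank_smul_sum_conj ρ ((B y).smulRight x)) z
  simp only [trace_smulRight, LinearMap.smul_apply, LinearMap.sum_apply, Module.End.mul_apply,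
    smulRight_apply, map_smul, Module.End.one_apply] at this
  rw [← this]
  congr 2 with g
  rw [← hB g y, self_inv_apply]

theorem sum_character_sq_eq_neg_card [CharZero k] [Nontrivial V] (e : V ≃ₗ[k] Dual k V)
    (hinv : ∀ g v w, e (ρ g v) (ρ g w) = e v w) (hskew : ∀ v w, e w v = -e v w) :
    ∑ g, ρ.character (g ^ 2) = -Fintype.card G := by
  let b := Module.finBasis k V
  let f : Fin (finrank k V) → V := fun i ↦ e.symm (b.coord i)
  have hf : ∀ i x, e (f i) x = b.coord i x := by simp [f]
  have htrace : ∀ X : Module.End k V,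
      trace k V (X * X) = ∑ i, ∑ j, e (f i) (X (b j)) * e (f j) (X (b i)) := by
    intro X
    rw [trace_eq_matrix_trace k b, toMatrix_mul, Matrix.trace]
    simp [Matrix.mul_apply, toMatrix_apply, hf]
  have horth : ∀ i j, (finrank k V : k) * ∑ g, e (f i) (ρ g (b j)) * e (f j) (ρ g (b i)) =
      -(Fintype.card G * (e (b j) (b i) * e (f j) (f i))) := by
    intro i j
    have := congrArg (e (f j))
      (finrank_smul_sum_smul_of_invariant ρ e hinv (b i) (b j) (f i))
    simp only [map_smul, map_sum, smul_eq_mul, LinearEquiv.coe_coe] at this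
    have hswap : ∀ g, e (f i) (ρ g (b j)) = -e (ρ g (b j)) (f i) := fun g ↦ hskew _ _
    simp only [hswap, neg_mul, sum_neg_distrib, mul_neg, this, mul_assoc]
  have hdual : ∀ i, ∑ j, e (b j) (b i) * e (f j) (f i) = 1 := by
    intro i
    calc ∑ j, e (b j) (b i) * e (f j) (f i) = e (∑ j, b.repr (f i) j • b j) (b i) := by
          simp only [map_sum, map_smul, LinearMap.sum_apply, LinearMap.smul_apply, smul_eq_mul,
            hf, Basis.coord_apply, mul_comm]
      _ = 1 := by rw [b.sum_repr, hf]; simp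
  apply mul_left_cancel₀ (Nat.cast_ne_zero.mpr finrank_pos.ne' : (finrank k V : k) ≠ 0)
  calc (finrank k V : k) * ∑ g, ρ.character (g ^ 2)
      = ∑ i, ∑ j, (finrank k V : k) * ∑ g, e (f i) (ρ g (b j)) * e (f j) (ρ g (b i)) := by
        simp_rw [character, pow_two, map_mul, htrace, mul_sum]
        rw [sum_comm]
        exact sum_congr rfl fun i _ ↦ sum_comm
    _ = finrank k V * -Fintype.card G := by
        simp [horth, ← mul_sum, hdual]

end IsIrreducible

end Representation

/-- If a finite group `G` has a nonzero irreducible finite-dimensional complex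
representation which is self-dual but admits no nonzero invariant symmetric bilinear form
(i.e. is of quaternionic type), then `4` divides the order of `G`. -/
theorem four_dvd_card_of_quaternionic_representation
    (G : Type) [Group G] [Fintype G]
    (V : Type) [AddCommGroup V] [Module ℂ V] [FiniteDimensional ℂ V] [Nontrivial V]
    (ρ : Representation ℂ G V)
    (hirr : IsSimpleModule (MonoidAlgebra ℂ G) ρ.asModule)
    (hdual : ∃ e : V ≃ₗ[ℂ] Module.Dual ℂ V, ∀ (g : G) (v : V), e (ρ g v) = ρ.dual g (e v))
    (hsymm : ∀ B : V →ₗ[ℂ] V →ₗ[ℂ] ℂ, (∀ v w : V, B v w = B w v) →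
      (∀ (g : G) (v w : V), B (ρ g v) (ρ g w) = B v w) → B = 0) :
    4 ∣ Fintype.card G := by
  have := (ρ.irreducible_iff_isSimpleModule_asModule).mpr hirr
  obtain ⟨e, he⟩ := hdual
  have hinv : ∀ g v w, e (ρ g v) (ρ g w) = e v w := fun g v w ↦ by
    rw [he, Representation.dual_apply, Dual.transpose_apply, LinearMap.comp_apply,
      Representation.inv_self_apply]
  have hFS := Representation.IsIrreducible.sum_character_sq_eq_neg_card ρ e hinv
    (ρ.eq_neg_flip_of_forall_symm_eq_zero hsymm (B := e) hinv)
  by_contra h4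
  obtain ⟨N, hN⟩ := ρ.exists_sum_character_sq_eq_natCast_of_not_four_dvd h4
  have hzero : ((Fintype.card G + N : ℕ) : ℂ) = 0 := by
    push_cast
    linear_combination hFS - hN
  have := Fintype.card_pos (α := G)
  have := Nat.cast_eq_zero.mp hzero
  omega
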